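/- arXiv:2202.08980 — 2 statements merged into one kernel-verified Lean document; each statement's English description precedes it below -/
import Mathlib

section
/- Assume 0 < q ≤ 1, α > 0, q + 1 < p ≤ 2, with the additional hypothesis a ≥ q(1−q) in case p = 2. Then the objective values satisfy the integral estimate ∫_{t₀}^{∞} t^{q} (g(x(t)) − g*) dt < +∞. -/
/-!
With `d = x - x*` and `λ = α / 2`, the energy
`E t = t^(2q) (g x - g*) + (a/2) t^(2q-p) ‖x‖² + ½ ‖λ d + t^q ẋ‖² + ½ λ (λ - q t^(q-1)) ‖d‖²`
is nonnegative once `q t^(q-1) ≤ λ`. Eliminating `ẍ` by the equation, the cross terms of `Ė`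
cancel, and for large `t` (where `q t^(q-1) ≤ α/8` and `q (1-q) t^(q-2) ≤ a t^(q-p)`, the latter
being the hypothesis on `a` when `p = 2`) convexity, `g x - g* ≤ ⟪∇g x, d⟫`, gives
`Ė ≤ -(α/4) t^q (g x - g*) + C t^(q-p)`. Integrating bounds `∫ t^q (g x - g*)` by `E T` plus the
integral of `C t^(q-p)`, which is finite because `q - p < -1`.
-/

open Filter Topology Set MeasureTheory
open scoped RealInnerProductSpace

theorem ConvexOn.le_sub_of_hasFDerivAt {E : Type*} [NormedAddCommGroup E] [NormedSpace ℝ E]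
    {s : Set E} {f : E → ℝ} {f' : E →L[ℝ] ℝ} {u v : E} (hf : ConvexOn ℝ s f) (hu : u ∈ s)
    (hv : v ∈ s) (h : HasFDerivAt f f' u) : f' (v - u) ≤ f v - f u := by
  have hline : ConvexOn ℝ (Icc (0 : ℝ) 1) (f ∘ AffineMap.lineMap u v) :=
    (hf.comp_affineMap _).subset (fun _ ht => hf.1.lineMap_mem hu hv ht) (convex_Icc 0 1)
  have hderiv : HasDerivAt (f ∘ AffineMap.lineMap (k := ℝ) u v) (f' (v - u)) 0 :=
    HasFDerivAt.comp_hasDerivAt (0 : ℝ) (by simpa using h)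
      (AffineMap.hasDerivAt_lineMap (𝕜 := ℝ))
  simpa [slope_def_field] using
    hline.le_slope_of_hasDerivAt (by simp) (by simp) zero_lt_one hderiv

theorem integrableOn_Ioi_of_hasDerivAt_le {E E' f h : ℝ → ℝ} {T : ℝ}
    (hE : ∀ t ≥ T, HasDerivAt E (E' t) t) (hE0 : ∀ t ≥ T, 0 ≤ E t)
    (hf : ContinuousOn f (Ici T)) (hf0 : ∀ t ≥ T, 0 ≤ f t) (hh : IntegrableOn h (Ioi T))
    (hle : ∀ t ≥ T, E' t ≤ h t - f t) : IntegrableOn f (Ioi T) := by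
  have hfi : ∀ s, IntegrableOn f (Icc T s) := fun s =>
    (hf.mono Icc_subset_Ici_self).integrableOn_Icc
  refine integrableOn_Ioi_of_intervalIntegral_norm_bounded (E T + ∫ t in Ioi T, ‖h t‖) T
    (fun s => (hfi s).mono_set Ioc_subset_Icc_self) tendsto_id ?_
  filter_upwards [eventually_ge_atTop T] with s hs
  have hhs : IntervalIntegrable h volume T s :=
    (intervalIntegrable_iff_integrableOn_Ioc_of_le hs).2 (hh.mono_set Ioc_subset_Ioi_self)
  have hfs : IntervalIntegrable f volume T s :=
    (intervalIntegrable_iff_integrableOn_Icc_of_le hs).2 (hfi s)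
  have hdecay : E s - E T ≤ ∫ t in T..s, (h t - f t) :=
    intervalIntegral.sub_le_integral_of_hasDeriv_right_of_le hs
      (fun t ht => (hE t ht.1).continuousAt.continuousWithinAt)
      (fun t ht => (hE t ht.1.le).hasDerivWithinAt)
      ((intervalIntegrable_iff_integrableOn_Icc_of_le hs).1 (hhs.sub hfs))
      (fun t ht => hle t ht.1.le)
  have hnorm : ∫ t in T..s, ‖f t‖ = ∫ t in T..s, f t :=
    intervalIntegral.integral_congr fun t ht =>
      Real.norm_of_nonneg (hf0 t (by rw [uIcc_of_le hs] at ht; exact ht.1))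
  have htail : ∫ t in T..s, h t ≤ ∫ t in Ioi T, ‖h t‖ := by
    rw [intervalIntegral.integral_of_le hs]
    calc ∫ t in Ioc T s, h t ≤ ∫ t in Ioc T s, ‖h t‖ :=
          (Real.le_norm_self _).trans (norm_integral_le_integral_norm _)
      _ ≤ ∫ t in Ioi T, ‖h t‖ :=
          setIntegral_mono_set hh.norm (ae_of_all _ fun _ => norm_nonneg _)
            (ae_of_all _ Ioc_subset_Ioi_self)
  rw [intervalIntegral.integral_sub hhs hfs] at hdecay
  linarith [hE0 s hs]

section Energy

variable {H : Type*} [NormedAddCommGroup H] [InnerProductSpace ℝ H]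

-- `y`, `v`, `G` stand for `x t`, `ẋ t`, `∇g (x t)`, and `z` for a minimizer of `g`.
noncomputable def tikhonovEnergy (g : H → ℝ) (α q a p : ℝ) (z : H) (t : ℝ) (y v : H) : ℝ :=
  t ^ (2 * q) * (g y - g z) + a / 2 * t ^ (2 * q - p) * ‖y‖ ^ 2
    + ‖(α / 2) • (y - z) + t ^ q • v‖ ^ 2 / 2
    + α / 2 * (α / 2 - q * t ^ (q - 1)) / 2 * ‖y - z‖ ^ 2

noncomputable def tikhonovEnergyDeriv (g : H → ℝ) (α q a p : ℝ) (z : H) (t : ℝ) (y v G : H) : ℝ :=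
  2 * q * t ^ (2 * q - 1) * (g y - g z) + a / 2 * (2 * q - p) * t ^ (2 * q - p - 1) * ‖y‖ ^ 2
    + t ^ q * (q * t ^ (q - 1) - α / 2) * ‖v‖ ^ 2 - α / 2 * t ^ q * ⟪G, y - z⟫
    - a * α / 2 * t ^ (q - p) * ⟪y - z, y⟫ + α / 4 * q * (1 - q) * t ^ (q - 2) * ‖y - z‖ ^ 2

variable {x x' x'' : ℝ → H} {G z : H} {α q a p t : ℝ}

theorem hasDerivAt_tikhonovMomentum (ht : 0 < t) (hx : HasDerivAt x (x' t) t)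
    (hx' : HasDerivAt x' (x'' t) t)
    (hODE : x'' t + (α / t ^ q) • x' t + G + (a / t ^ p) • x t = 0) :
    HasDerivAt (fun s => (α / 2) • (x s - z) + s ^ q • x' s)
      ((q * t ^ (q - 1) - α / 2) • x' t - t ^ q • G - (a * t ^ (q - p)) • x t) t := by
  have hacc : t ^ q • x'' t = -α • x' t - t ^ q • G - (a * t ^ (q - p)) • x t := by
    rw [eq_neg_of_add_eq_zero_left (by rw [← hODE]; abel :
      x'' t + ((α / t ^ q) • x' t + G + (a / t ^ p) • x t) = 0)]
    rw [Real.rpow_sub ht]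
    simp only [smul_neg, smul_add, smul_smul]
    field_simp
    module
  refine (((hx.sub_const z).const_smul (α / 2)).add
    ((Real.hasDerivAt_rpow_const (p := q) (Or.inl ht.ne')).smul hx')).congr_deriv ?_
  rw [hacc]
  module

theorem hasDerivAt_tikhonovEnergy [CompleteSpace H] {g : H → ℝ} (ht : 0 < t)
    (hx : HasDerivAt x (x' t) t) (hx' : HasDerivAt x' (x'' t) t) (hg : HasGradientAt g G (x t))
    (hODE : x'' t + (α / t ^ q) • x' t + G + (a / t ^ p) • x t = 0) :
    HasDerivAt (fun s => tikhonovEnergy g α q a p z s (x s) (x' s))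
      (tikhonovEnergyDeriv g α q a p z t (x t) (x' t) G) t := by
  have hrpow (r : ℝ) : HasDerivAt (fun s : ℝ => s ^ r) (r * t ^ (r - 1)) t :=
    Real.hasDerivAt_rpow_const (Or.inl ht.ne')
  have hgap : HasDerivAt (fun s => g (x s) - g z) ⟪G, x' t⟫ t := by
    simpa using (hg.hasFDerivAt.comp_hasDerivAt t hx).sub_const (g z)
  have hweight : HasDerivAt (fun s : ℝ => α / 2 * (α / 2 - q * s ^ (q - 1)) / 2)
      (α / 4 * q * (1 - q) * t ^ (q - 2)) t := by
    refine ((((hrpow (q - 1)).const_mul q).const_sub (α / 2)).const_mul (α / 2)).div_const 2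
      |>.congr_deriv ?_
    rw [show q - 1 - 1 = q - 2 by ring]
    ring
  refine ((((hrpow (2 * q)).mul hgap).add (((hrpow (2 * q - p)).const_mul (a / 2)).mul
    hx.norm_sq)).add
    ((hasDerivAt_tikhonovMomentum (z := z) ht hx hx' hODE).norm_sq.div_const 2)).add
    (hweight.mul (hx.sub_const z).norm_sq) |>.congr_deriv ?_
  have hpow (r s : ℝ) : t ^ (r + s) = t ^ r * t ^ s := Real.rpow_add ht r s
  rw [tikhonovEnergyDeriv, show 2 * q - 1 = q + (q - 1) by ring,
    show 2 * q - p - 1 = (q - 1) + (q - p) by ring, show 2 * q - p = q + (q - p) by ring,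
    show 2 * q = q + q by ring]
  simp only [hpow, inner_add_left, inner_sub_left, inner_sub_right,
    real_inner_smul_left, real_inner_smul_right, real_inner_self_eq_norm_sq]
  simp only [real_inner_comm]
  ring

theorem tikhonovEnergy_nonneg {g : H → ℝ} {y v : H} (ht : 0 ≤ t) (hα : 0 ≤ α) (ha : 0 ≤ a)
    (hfric : q * t ^ (q - 1) ≤ α / 2) (hmin : g z ≤ g y) :
    0 ≤ tikhonovEnergy g α q a p z t y v := by
  have hgap : 0 ≤ t ^ (2 * q) * (g y - g z) :=
    mul_nonneg (Real.rpow_nonneg ht _) (sub_nonneg.2 hmin)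
  have hweight : 0 ≤ α / 2 * (α / 2 - q * t ^ (q - 1)) / 2 * ‖y - z‖ ^ 2 := by
    have : 0 ≤ α / 2 - q * t ^ (q - 1) := by linarith
    positivity
  have := Real.rpow_nonneg ht (2 * q - p)
  unfold tikhonovEnergy
  positivity

theorem tikhonovEnergyDeriv_le {g : H → ℝ} {y v : H} (ht : 0 < t) (hα : 0 ≤ α) (ha : 0 ≤ a)
    (hqp : 2 * q ≤ p) (hfric : q * t ^ (q - 1) ≤ α / 8) (htik : q * (1 - q) ≤ a * t ^ (2 - p))
    (hmin : g z ≤ g y) (hconv : g y - g z ≤ ⟪G, y - z⟫) :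
    tikhonovEnergyDeriv g α q a p z t y v G
      ≤ a * α / 4 * ‖z‖ ^ 2 * t ^ (q - p) - α / 4 * (t ^ q * (g y - g z)) := by
  have hpow (r s : ℝ) : t ^ (r + s) = t ^ r * t ^ s := Real.rpow_add ht r s
  have htq := Real.rpow_pos_of_pos ht q
  have hgap : 0 ≤ g y - g z := sub_nonneg.2 hmin
  have hgrowth : 2 * q * t ^ (2 * q - 1) * (g y - g z) ≤ α / 4 * (t ^ q * (g y - g z)) := by
    rw [show 2 * q - 1 = q + (q - 1) by ring, hpow]
    have := mul_le_mul_of_nonneg_right hfric (mul_nonneg htq.le hgap)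
    linarith
  have htikhonov : a / 2 * (2 * q - p) * t ^ (2 * q - p - 1) * ‖y‖ ^ 2 ≤ 0 := by
    have := Real.rpow_nonneg ht.le (2 * q - p - 1)
    have : 0 ≤ p - 2 * q := by linarith
    have : 0 ≤ a / 2 * (p - 2 * q) * t ^ (2 * q - p - 1) * ‖y‖ ^ 2 := by positivity
    linarith
  have hkinetic : t ^ q * (q * t ^ (q - 1) - α / 2) * ‖v‖ ^ 2 ≤ 0 :=
    mul_nonpos_of_nonpos_of_nonneg
      (mul_nonpos_of_nonneg_of_nonpos htq.le (by linarith)) (sq_nonneg _)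
  have hgradient : α / 2 * t ^ q * (g y - g z) ≤ α / 2 * t ^ q * ⟪G, y - z⟫ :=
    mul_le_mul_of_nonneg_left hconv (by positivity)
  have hpolar : ⟪y - z, y⟫ = (‖y‖ ^ 2 + ‖y - z‖ ^ 2 - ‖z‖ ^ 2) / 2 := by
    have := norm_sub_sq_real y (y - z)
    rw [sub_sub_cancel, real_inner_comm] at this
    linarith
  have hcurv : α / 4 * q * (1 - q) * t ^ (q - 2) * ‖y - z‖ ^ 2
      ≤ α / 4 * a * t ^ (q - p) * ‖y - z‖ ^ 2 := by
    rw [show q - p = (2 - p) + (q - 2) by ring, hpow]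
    have := mul_le_mul_of_nonneg_right htik (Real.rpow_nonneg ht.le (q - 2))
    have := mul_le_mul_of_nonneg_left this (by positivity : 0 ≤ α / 4 * ‖y - z‖ ^ 2)
    linarith
  have hdamp : 0 ≤ a * α / 4 * t ^ (q - p) * ‖y‖ ^ 2 := by
    have := Real.rpow_nonneg ht.le (q - p)
    positivity
  unfold tikhonovEnergyDeriv
  rw [hpolar]
  linarith

end Energy

theorem eventually_const_mul_rpow_le {c r ε : ℝ} (hr : r < 0) (hε : 0 < ε) :
    ∀ᶠ t in atTop, c * t ^ r ≤ ε := by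
  have := (tendsto_rpow_neg_atTop (neg_pos.2 hr)).const_mul c
  rw [neg_neg, mul_zero] at this
  exact (this.eventually (gt_mem_nhds hε)).mono fun _ => le_of_lt

theorem eventually_le_mul_rpow_two_sub {a c p : ℝ} (ha : 0 < a) (hp : p ≤ 2)
    (hpc : p = 2 → c ≤ a) :
    ∀ᶠ t in atTop, c ≤ a * t ^ (2 - p) := by
  rcases hp.eq_or_lt with rfl | hp
  · exact Eventually.of_forall fun t => by simpa using hpc rfl
  · exact ((tendsto_rpow_atTop (sub_pos.2 hp)).const_mul_atTop ha).eventually_ge_atTop c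

theorem stmt6_general
    {H : Type*} [NormedAddCommGroup H] [InnerProductSpace ℝ H] [CompleteSpace H]
    (g : H → ℝ) (g' : H → H)
    (hg_convex : ConvexOn ℝ Set.univ g)
    (hg_grad : ∀ y : H, HasGradientAt g (g' y) y)
    (t₀ α q a p : ℝ) (hα : 0 < α) (hq0 : 0 < q) (ha0 : 0 < a)
    (x x' x'' : ℝ → H)
    (hx : ∀ t ≥ t₀, HasDerivAt x (x' t) t)
    (hx' : ∀ t ≥ t₀, HasDerivAt x' (x'' t) t)
    (hODE : ∀ t ≥ t₀, x'' t + (α / t ^ q) • x' t + g' (x t) + (a / t ^ p) • x t = 0)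
    (xstar : H) (hxstar : ∀ y : H, g xstar ≤ g y)
    (hqp : q + 1 < p) (hp2 : p ≤ 2) (hpa : p = 2 → a ≥ q * (1 - q)) :
    MeasureTheory.IntegrableOn (fun t => t ^ q * (g (x t) - g xstar)) (Set.Ici t₀) := by
  obtain ⟨T, hT⟩ := ((eventually_const_mul_rpow_le (c := q) (by linarith : q - 1 < 0)
    (by positivity : 0 < α / 8)).and ((eventually_le_mul_rpow_two_sub ha0 hp2 hpa).and
    ((eventually_ge_atTop t₀).and (eventually_gt_atTop 0)))).exists_forall_of_atTop
  have hT₀ : t₀ ≤ T := (hT T le_rfl).2.2.1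
  have hcont : ContinuousOn (fun t => t ^ q * (g (x t) - g xstar)) (Ici t₀) := fun t ht =>
    ((Real.continuousAt_rpow_const t q (Or.inr hq0.le)).mul
      (((hg_grad (x t)).differentiableAt.continuousAt.comp (hx t ht).continuousAt).sub
        continuousAt_const)).continuousWithinAt
  have htail : IntegrableOn (fun t => α / 4 * (t ^ q * (g (x t) - g xstar))) (Ioi T) := by
    refine integrableOn_Ioi_of_hasDerivAt_le
      (E := fun t => tikhonovEnergy g α q a p xstar t (x t) (x' t))
      (E' := fun t => tikhonovEnergyDeriv g α q a p xstar t (x t) (x' t) (g' (x t)))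
      (h := fun t => a * α / 4 * ‖xstar‖ ^ 2 * t ^ (q - p)) (fun t ht => ?_) (fun t ht => ?_)
      ((continuousOn_const.mul hcont).mono (Ici_subset_Ici.2 hT₀)) (fun t ht => ?_)
      ((integrableOn_Ioi_rpow_of_lt (by linarith) (hT T le_rfl).2.2.2).const_mul _)
      (fun t ht => ?_)
    all_goals obtain ⟨hfric, htik, ht₀, ht⟩ := hT t ht
    · exact hasDerivAt_tikhonovEnergy ht (hx t ht₀) (hx' t ht₀) (hg_grad _) (hODE t ht₀)
    · exact tikhonovEnergy_nonneg ht.le hα.le ha0.le (by linarith) (hxstar _)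
    · exact mul_nonneg (by positivity)
        (mul_nonneg (Real.rpow_nonneg ht.le q) (sub_nonneg.2 (hxstar _)))
    · have hconv := hg_convex.le_sub_of_hasFDerivAt (mem_univ (x t)) (mem_univ xstar)
        (hg_grad (x t)).hasFDerivAt
      rw [InnerProductSpace.toDual_apply_apply, ← neg_sub, inner_neg_right] at hconv
      exact tikhonovEnergyDeriv_le ht hα.le ha0.le (by linarith) hfric htik (hxstar _)
        (by linarith)
  rw [← Icc_union_Ioi_eq_Ici hT₀]
  exact ((hcont.mono Icc_subset_Ici_self).integrableOn_Icc).union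
    ((integrable_const_mul_iff (by positivity : 0 < α / 4).ne'.isUnit _).1 htail)

theorem stmt6
    {H : Type*} [NormedAddCommGroup H] [InnerProductSpace ℝ H] [CompleteSpace H]
    (g : H → ℝ) (g' : H → H)
    (hg_convex : ConvexOn ℝ Set.univ g)
    (hg_grad : ∀ y : H, HasGradientAt g (g' y) y)
    (hg_lip : ∀ s : Set H, Bornology.IsBounded s → ∃ K : NNReal, LipschitzOnWith K g' s)
    (t₀ α q a p : ℝ) (ht₀ : 0 < t₀) (hα : 0 < α) (hq0 : 0 < q) (ha0 : 0 < a) (hp0 : 0 < p)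
    (x x' x'' : ℝ → H)
    (hx : ∀ t ≥ t₀, HasDerivAt x (x' t) t)
    (hx' : ∀ t ≥ t₀, HasDerivAt x' (x'' t) t)
    (hx''c : ContinuousOn x'' (Set.Ici t₀))
    (hODE : ∀ t ≥ t₀, x'' t + (α / t ^ q) • x' t + g' (x t) + (a / t ^ p) • x t = 0)
    (xstar : H) (hxstar : ∀ y : H, g xstar ≤ g y)
    (hq1 : q ≤ 1) (hqp : q + 1 < p) (hp2 : p ≤ 2) (hpa : p = 2 → a ≥ q * (1 - q)) :
    MeasureTheory.IntegrableOn (fun t => t ^ q * (g (x t) - g xstar)) (Set.Ici t₀) :=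
  stmt6_general g g' hg_convex hg_grad t₀ α q a p hα hq0 ha0 x x' x'' hx hx' hODE xstar hxstar hqp
    hp2 hpa
end

section
/- Assume 0 < q < 1, α > 0, q + 1 < p ≤ 2, with the additional hypothesis a ≥ q(1−q) in case p = 2. Then for every x* ∈ argmin g, the limit lim_{t→∞} ‖x(t) − x*‖ exists (i.e. the function t ↦ ‖x(t) − x*‖ converges to some real number as t → ∞). -/
/-!
Write `n(t) = ‖x(t) - x*‖²`. Convexity (`⟪∇g(x), x - x*⟫ ≥ 0`) and
`⟪x, x - x*⟫ ≥ -‖x*‖² / 4` give `n'' + (α / t^q) n' ≤ w := 2‖ẋ‖² + (a‖x*‖² / 2) t^(-p)`.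
For a damping `α / t^q` with `q < 1`, such an inequality forces a nonnegative `n` to converge
once `∫ t^q w < ∞`: multiplying by `exp ∫ α / t^q` bounds `n'` from above by a function with
finite integral. As `p > q + 1`, it remains to show `∫ t^q ‖ẋ‖² < ∞`. This is the dissipation
of a Lyapunov energy `E` with `E' ≤ C t^(q-2) E - (α/6) t^q ‖ẋ‖² + C' t^(q-p)`; both weights
are integrable, so a Gronwall argument bounds the total dissipation.
-/

open Filter Topology Set RealInnerProductSpace

section Primitive

/-- For continuous `f ≥ 0` this says that `f` is integrable on `[T, ∞)`. -/
def BddAbovePrimitiveOn (f : ℝ → ℝ) (T : ℝ) : Prop :=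
  ∃ F : ℝ → ℝ, ∃ M : ℝ, (∀ t ≥ T, HasDerivAt F (f t) t) ∧ ∀ t ≥ T, F t ≤ M

variable {f f' g : ℝ → ℝ} {T : ℝ}

theorem monotoneOn_Ici_of_hasDerivAt_nonneg (hf : ∀ t ≥ T, HasDerivAt f (f' t) t)
    (hf' : ∀ t ≥ T, 0 ≤ f' t) : MonotoneOn f (Ici T) :=
  monotoneOn_of_hasDerivWithinAt_nonneg (convex_Ici T)
    (fun t ht => (hf t ht).continuousAt.continuousWithinAt)
    (fun t ht => by rw [interior_Ici] at ht ⊢; exact (hf t (le_of_lt ht)).hasDerivWithinAt)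
    (fun t ht => by rw [interior_Ici] at ht; exact hf' t (le_of_lt ht))

theorem antitoneOn_Ici_of_hasDerivAt_nonpos (hf : ∀ t ≥ T, HasDerivAt f (f' t) t)
    (hf' : ∀ t ≥ T, f' t ≤ 0) : AntitoneOn f (Ici T) :=
  antitoneOn_of_hasDerivWithinAt_nonpos (convex_Ici T)
    (fun t ht => (hf t ht).continuousAt.continuousWithinAt)
    (fun t ht => by rw [interior_Ici] at ht ⊢; exact (hf t (le_of_lt ht)).hasDerivWithinAt)
    (fun t ht => by rw [interior_Ici] at ht; exact hf' t (le_of_lt ht))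

theorem MonotoneOn.exists_tendsto_atTop_of_le {M : ℝ} (hf : MonotoneOn f (Ici T))
    (hM : ∀ t ≥ T, f t ≤ M) : ∃ L, Tendsto f atTop (𝓝 L) := by
  have hmono : Monotone fun t => f (max t T) := fun s t hst =>
    hf (le_max_right s T) (le_max_right t T) (max_le_max hst le_rfl)
  refine ⟨_, (tendsto_atTop_ciSup hmono ⟨M, ?_⟩).congr' ?_⟩
  · rintro _ ⟨t, rfl⟩
    exact hM _ (le_max_right t T)
  · filter_upwards [eventually_ge_atTop T] with t ht
    rw [max_eq_left ht]

theorem exists_hasDerivAt_Ici_of_continuousOn (hf : ContinuousOn f (Ici T)) :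
    ∃ F : ℝ → ℝ, F T = 0 ∧ ∀ t ≥ T, HasDerivAt F (f t) t := by
  -- freezing `f` to the left of `T` makes the integral differentiable at `T` as well
  have hc : Continuous fun s => f (max s T) :=
    hf.comp_continuous (continuous_id.max continuous_const) fun s => le_max_right s T
  refine ⟨fun t => ∫ s in T..t, f (max s T), by simp, fun t ht => ?_⟩
  have := intervalIntegral.integral_hasDerivAt_right (hc.intervalIntegrable T t)
    (hc.stronglyMeasurableAtFilter _ _) hc.continuousAt
  rwa [max_eq_left ht] at this

theorem bddAbovePrimitiveOn_rpow {e : ℝ} (he : e < -1) (hT : 0 < T) :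
    BddAbovePrimitiveOn (fun t => t ^ e) T := by
  refine ⟨fun t => t ^ (e + 1) / (e + 1), 0, fun t ht => ?_, fun t ht => ?_⟩
  · have := (Real.hasDerivAt_rpow_const (p := e + 1) (Or.inl (hT.trans_le ht).ne')).div_const
      (e + 1)
    rwa [add_sub_cancel_right, mul_div_cancel_left₀ _ (by linarith : e + 1 ≠ 0)] at this
  · exact div_nonpos_of_nonneg_of_nonpos (Real.rpow_nonneg (hT.trans_le ht).le _) (by linarith)

namespace BddAbovePrimitiveOn

theorem add (hf : BddAbovePrimitiveOn f T) (hg : BddAbovePrimitiveOn g T) :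
    BddAbovePrimitiveOn (fun t => f t + g t) T := by
  obtain ⟨F, M, hF, hFM⟩ := hf
  obtain ⟨G, N, hG, hGN⟩ := hg
  exact ⟨F + G, M + N, fun t ht => (hF t ht).add (hG t ht),
    fun t ht => add_le_add (hFM t ht) (hGN t ht)⟩

theorem const_mul (hf : BddAbovePrimitiveOn f T) {c : ℝ} (hc : 0 ≤ c) :
    BddAbovePrimitiveOn (fun t => c * f t) T := by
  obtain ⟨F, M, hF, hFM⟩ := hf
  exact ⟨fun t => c * F t, c * M, fun t ht => (hF t ht).const_mul c,
    fun t ht => mul_le_mul_of_nonneg_left (hFM t ht) hc⟩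

theorem congr (hf : BddAbovePrimitiveOn f T) (hfg : ∀ t ≥ T, f t = g t) :
    BddAbovePrimitiveOn g T := by
  obtain ⟨F, M, hF, hFM⟩ := hf
  exact ⟨F, M, fun t ht => hfg t ht ▸ hF t ht, hFM⟩

theorem mono (hg : BddAbovePrimitiveOn g T) (hf : ContinuousOn f (Ici T))
    (hfg : ∀ t ≥ T, f t ≤ g t) : BddAbovePrimitiveOn f T := by
  obtain ⟨G, M, hG, hGM⟩ := hg
  obtain ⟨F, -, hF⟩ := exists_hasDerivAt_Ici_of_continuousOn hf
  have hanti : AntitoneOn (fun t => F t - G t) (Ici T) :=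
    antitoneOn_Ici_of_hasDerivAt_nonpos (fun t ht => (hF t ht).sub (hG t ht))
      fun t ht => sub_nonpos.2 (hfg t ht)
  refine ⟨F, F T - G T + M, hF, fun t ht => ?_⟩
  linarith [hanti self_mem_Ici ht ht, hGM t ht]

end BddAbovePrimitiveOn

end Primitive

section Dissipation

variable {E E' β v r : ℝ → ℝ} {T : ℝ}

theorem bddAbovePrimitiveOn_of_dissipation (hE : ∀ t ≥ T, HasDerivAt E (E' t) t)
    (hE0 : ∀ t ≥ T, 0 ≤ E t) (hβ : BddAbovePrimitiveOn β T) (hβ0 : ∀ t ≥ T, 0 ≤ β t)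
    (hr : BddAbovePrimitiveOn r T) (hr0 : ∀ t ≥ T, 0 ≤ r t) (hv : ContinuousOn v (Ici T))
    (hv0 : ∀ t ≥ T, 0 ≤ v t) (hle : ∀ t ≥ T, E' t ≤ β t * E t - v t + r t) :
    BddAbovePrimitiveOn v T := by
  obtain ⟨B, MB, hB, hBM⟩ := hβ
  obtain ⟨R, MR, hR, hRM⟩ := hr
  have hBmono : MonotoneOn B (Ici T) := monotoneOn_Ici_of_hasDerivAt_nonneg hB hβ0
  -- with the integrating factor `e = exp (B T - B) ∈ [exp (B T - MB), 1]`,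
  -- `E e + ∫ v e - ∫ r` is antitone
  set e : ℝ → ℝ := fun t => Real.exp (B T - B t) with he_def
  have he : ∀ t ≥ T, HasDerivAt e (-(β t) * e t) t := fun t ht => by
    simpa [he_def, mul_comm] using ((hB t ht).const_sub (B T)).exp
  have he0 : ∀ t, 0 < e t := fun t => Real.exp_pos _
  have he1 : ∀ t ≥ T, e t ≤ 1 := fun t ht =>
    Real.exp_le_one_iff.2 (sub_nonpos.2 (hBmono self_mem_Ici ht ht))
  have hve : ContinuousOn (fun t => v t * e t) (Ici T) :=
    hv.mul fun t ht => (he t ht).continuousAt.continuousWithinAt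
  obtain ⟨V, hVT, hV⟩ := exists_hasDerivAt_Ici_of_continuousOn hve
  have hΦ : AntitoneOn (fun t => E t * e t + V t - R t) (Ici T) := by
    refine antitoneOn_Ici_of_hasDerivAt_nonpos
      (fun t ht => (((hE t ht).mul (he t ht)).add (hV t ht)).sub (hR t ht)) fun t ht => ?_
    have h := mul_le_mul_of_nonneg_right (hle t ht) (he0 t).le
    nlinarith [mul_le_mul_of_nonneg_left (he1 t ht) (hr0 t ht)]
  have hVbdd : BddAbovePrimitiveOn (fun t => v t * e t) T := by
    refine ⟨V, E T * e T - R T + MR, hV, fun t ht => ?_⟩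
    have := hΦ self_mem_Ici ht ht
    nlinarith [hE0 t ht, he0 t, hRM t ht]
  refine (hVbdd.const_mul (Real.exp_pos (MB - B T)).le).mono hv fun t ht => ?_
  have : 1 ≤ Real.exp (MB - B T) * e t := by
    rw [he_def, ← Real.exp_add]
    exact Real.one_le_exp (by linarith [hBM t ht])
  nlinarith [hv0 t ht]

end Dissipation

section DampedInequality

variable {n n' n'' w W Γ : ℝ → ℝ} {α q T : ℝ}

theorem antitoneOn_mul_deriv_sub_of_le {γ : ℝ → ℝ} (hn' : ∀ t ≥ T, HasDerivAt n' (n'' t) t)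
    (hΓ : ∀ t ≥ T, HasDerivAt Γ (γ t * Γ t) t) (hΓ0 : ∀ t ≥ T, 0 ≤ Γ t)
    (hW : ∀ t ≥ T, HasDerivAt W (Γ t * w t) t) (hle : ∀ t ≥ T, n'' t + γ t * n' t ≤ w t) :
    AntitoneOn (fun t => Γ t * n' t - W t) (Ici T) := by
  refine antitoneOn_Ici_of_hasDerivAt_nonpos
    (fun t ht => ((hΓ t ht).mul (hn' t ht)).sub (hW t ht)) fun t ht => ?_
  nlinarith [mul_le_mul_of_nonneg_left (hle t ht) (hΓ0 t ht)]

/-- Since `(t ^ q / Γ)' ≤ -(α / 2) / Γ`, the weight `t ^ q / Γ(t)` dominates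
`(α / 2) ∫_t^∞ 1 / Γ`; the antitone function `K` below uses this in place of Fubini. -/
theorem BddAbovePrimitiveOn.add_div_integratingFactor {c : ℝ} (hα : 0 < α) (hT : 0 < T)
    (hsmall : ∀ t ≥ T, q * t ^ (q - 1) ≤ α / 2)
    (hΓ : ∀ t ≥ T, HasDerivAt Γ (α / t ^ q * Γ t) t) (hΓ0 : ∀ t ≥ T, 0 < Γ t)
    (hW : ∀ t ≥ T, HasDerivAt W (Γ t * w t) t) (hcW : ∀ t ≥ T, 0 ≤ c + W t)
    (hw : BddAbovePrimitiveOn (fun t => t ^ q * w t) T) :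
    BddAbovePrimitiveOn (fun t => (c + W t) / Γ t) T := by
  obtain ⟨S, M, hS, hSM⟩ := hw
  have hu : ContinuousOn (fun t => (c + W t) / Γ t) (Ici T) := fun t ht =>
    (((hW t ht).continuousAt.const_add c).div (hΓ t ht).continuousAt
      (hΓ0 t ht).ne').continuousWithinAt
  obtain ⟨U, -, hU⟩ := exists_hasDerivAt_Ici_of_continuousOn hu
  have hrpow : ∀ t ≥ T, HasDerivAt (fun s => s ^ q) (q * t ^ (q - 1)) t := fun t ht =>
    Real.hasDerivAt_rpow_const (Or.inl (hT.trans_le ht).ne')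
  have hK : AntitoneOn (fun t => U t + 2 / α * (t ^ q / Γ t * (c + W t)) - 2 / α * S t)
      (Ici T) := by
    refine antitoneOn_Ici_of_hasDerivAt_nonpos (fun t ht => ((hU t ht).add
      ((((hrpow t ht).div (hΓ t ht) (hΓ0 t ht).ne').mul ((hW t ht).const_add c)).const_mul
        (2 / α))).sub ((hS t ht).const_mul (2 / α))) fun t ht => ?_
    have htq : t ^ q ≠ 0 := (Real.rpow_pos_of_pos (hT.trans_le ht) q).ne'
    have hΓt := (hΓ0 t ht).ne'
    have hderiv : (c + W t) / Γ t + 2 / α * ((q * t ^ (q - 1) * Γ t - t ^ q * (α / t ^ q * Γ t))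
          / Γ t ^ 2 * (c + W t) + t ^ q / Γ t * (Γ t * w t)) - 2 / α * (t ^ q * w t)
        = (c + W t) / Γ t * (2 / α * (q * t ^ (q - 1)) - 1) := by
      field_simp
      ring
    beta_reduce
    rw [Pi.div_apply, hderiv]
    refine mul_nonpos_of_nonneg_of_nonpos (div_nonneg (hcW t ht) (hΓ0 t ht).le) ?_
    have : 2 / α * (q * t ^ (q - 1)) ≤ 1 := by
      rw [div_mul_eq_mul_div, div_le_one hα]
      linarith [hsmall t ht]
    linarith
  refine ⟨U, U T + 2 / α * (T ^ q / Γ T * (c + W T)) - 2 / α * S T + 2 / α * M, hU,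
    fun t ht => ?_⟩
  have hKt := hK self_mem_Ici ht ht
  have : 0 ≤ 2 / α * (t ^ q / Γ t * (c + W t)) :=
    mul_nonneg (by positivity) (mul_nonneg (div_nonneg
      (Real.rpow_nonneg (hT.trans_le ht).le q) (hΓ0 t ht).le) (hcW t ht))
  nlinarith [mul_le_mul_of_nonneg_left (hSM t ht) (by positivity : 0 ≤ 2 / α)]

theorem exists_tendsto_of_damped_le (hα : 0 < α) (hT : 0 < T)
    (hsmall : ∀ t ≥ T, q * t ^ (q - 1) ≤ α / 2)
    (hn : ∀ t ≥ T, HasDerivAt n (n' t) t) (hn' : ∀ t ≥ T, HasDerivAt n' (n'' t) t)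
    (hn0 : ∀ t ≥ T, 0 ≤ n t) (hwc : ContinuousOn w (Ici T)) (hw0 : ∀ t ≥ T, 0 ≤ w t)
    (hle : ∀ t ≥ T, n'' t + α / t ^ q * n' t ≤ w t)
    (hw : BddAbovePrimitiveOn (fun t => t ^ q * w t) T) :
    ∃ L, Tendsto n atTop (𝓝 L) := by
  obtain ⟨A, -, hA⟩ := exists_hasDerivAt_Ici_of_continuousOn (f := fun t => α / t ^ q)
    fun t ht => (continuousAt_const.div (Real.continuousAt_rpow_const t q
      (Or.inl (hT.trans_le ht).ne')) (Real.rpow_pos_of_pos (hT.trans_le ht) q).ne')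
      |>.continuousWithinAt
  set Γ : ℝ → ℝ := fun t => Real.exp (A t) with hΓ_def
  have hΓ0 : ∀ t, 0 < Γ t := fun t => Real.exp_pos _
  have hΓ : ∀ t ≥ T, HasDerivAt Γ (α / t ^ q * Γ t) t := fun t ht => by
    simpa [hΓ_def, mul_comm] using (hA t ht).exp
  obtain ⟨W, hWT, hW⟩ := exists_hasDerivAt_Ici_of_continuousOn (f := fun t => Γ t * w t)
    ((continuousOn_of_forall_continuousAt fun t ht => (hΓ t ht).continuousAt).mul hwc)
  have hW0 : ∀ t ≥ T, 0 ≤ W t := fun t ht => hWT ▸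
    monotoneOn_Ici_of_hasDerivAt_nonneg hW (fun s hs => mul_nonneg (hΓ0 s).le (hw0 s hs))
      self_mem_Ici ht ht
  set c := |Γ T * n' T|
  have hcW : ∀ t ≥ T, 0 ≤ c + W t := fun t ht => add_nonneg (abs_nonneg _) (hW0 t ht)
  have hn'le : ∀ t ≥ T, n' t ≤ (c + W t) / Γ t := fun t ht => by
    have := antitoneOn_mul_deriv_sub_of_le hn' hΓ (fun t _ => (hΓ0 t).le) hW hle
      self_mem_Ici ht ht
    rw [le_div_iff₀ (hΓ0 t)]
    linarith [le_abs_self (Γ T * n' T)]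
  obtain ⟨U, M, hU, hUM⟩ := BddAbovePrimitiveOn.add_div_integratingFactor hα hT hsmall hΓ
    (fun t _ => hΓ0 t) hW hcW hw
  have hUmono := monotoneOn_Ici_of_hasDerivAt_nonneg hU fun t ht =>
    div_nonneg (hcW t ht) (hΓ0 t).le
  obtain ⟨L₁, hL₁⟩ := hUmono.exists_tendsto_atTop_of_le hUM
  obtain ⟨L₂, hL₂⟩ := MonotoneOn.exists_tendsto_atTop_of_le (M := M)
    (monotoneOn_Ici_of_hasDerivAt_nonneg (fun t ht => (hU t ht).sub (hn t ht))
      fun t ht => sub_nonneg.2 (hn'le t ht))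
    fun t ht => by
      rw [Pi.sub_apply]
      linarith [hUM t ht, hn0 t ht]
  exact ⟨L₁ - L₂, (hL₁.sub hL₂).congr fun t => sub_sub_cancel _ _⟩

end DampedInequality

section Hilbert

variable {H : Type*} [NormedAddCommGroup H] [InnerProductSpace ℝ H]

theorem inner_sub_add_inner_self_div_four_nonneg (u s : H) : 0 ≤ ⟪u, u - s⟫ + ⟪s, s⟫ / 4 := by
  have h := real_inner_self_nonneg (x := u - (2⁻¹ : ℝ) • s)
  simp only [inner_sub_left, inner_sub_right, real_inner_smul_left, real_inner_smul_right,
    real_inner_comm u s] at h ⊢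
  linarith

variable [CompleteSpace H] {g : H → ℝ} {g' : H → H}

theorem ConvexOn.sub_le_inner_of_hasGradientAt (hg : ConvexOn ℝ univ g) {u d : H}
    (hd : HasGradientAt g d u) (v : H) : g u - g v ≤ ⟪d, u - v⟫ := by
  have hφ : HasDerivAt (g ∘ AffineMap.lineMap (k := ℝ) u v) ⟪d, v - u⟫ 0 := by
    have hd' := hd.hasFDerivAt
    rw [← AffineMap.lineMap_apply_zero (k := ℝ) u v] at hd'
    simpa using hd'.comp_hasDerivAt (0 : ℝ) AffineMap.hasDerivAt_lineMap
  have := (hg.comp_affineMap (AffineMap.lineMap u v)).le_slope_of_hasDerivAt (mem_univ 0)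
    (mem_univ 1) zero_lt_one hφ
  simp only [slope_def_field, Function.comp_apply, AffineMap.lineMap_apply_zero,
    AffineMap.lineMap_apply_one, sub_zero, div_one] at this
  rw [← neg_sub v u, inner_neg_right]
  linarith

end Hilbert

namespace TikhonovFlow

variable {H : Type*} [NormedAddCommGroup H] [InnerProductSpace ℝ H]
  {g : H → ℝ} {g' : H → H} {xstar : H} {x x' x'' : ℝ → H} {α q a p t T : ℝ}

noncomputable def energy (g : H → ℝ) (xstar : H) (x x' : ℝ → H) (α q a p t : ℝ) : ℝ :=
  t ^ (2 * q) * (g (x t) - g xstar)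
  + 1 / 2 * ⟪(2 * α / 3) • (x t - xstar) + t ^ q • x' t,
      (2 * α / 3) • (x t - xstar) + t ^ q • x' t⟫
  + α / 3 * (α / 3 - q * t ^ (q - 1)) * ⟪x t - xstar, x t - xstar⟫
  + a / 2 * t ^ (2 * q - p) * ⟪x t, x t⟫

-- the derivative of `energy`, in the shape produced by the product and chain rules
noncomputable def energyRate (g : H → ℝ) (g' : H → H) (xstar : H) (x x' x'' : ℝ → H)
    (α q a p t : ℝ) : ℝ :=
  (2 * q * t ^ (2 * q - 1) * (g (x t) - g xstar) + t ^ (2 * q) * ⟪g' (x t), x' t⟫)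
  + 1 / 2 * (⟪(2 * α / 3) • (x t - xstar) + t ^ q • x' t,
        (2 * α / 3) • x' t + (t ^ q • x'' t + (q * t ^ (q - 1)) • x' t)⟫
      + ⟪(2 * α / 3) • x' t + (t ^ q • x'' t + (q * t ^ (q - 1)) • x' t),
        (2 * α / 3) • (x t - xstar) + t ^ q • x' t⟫)
  + (α / 3 * -(q * ((q - 1) * t ^ (q - 2))) * ⟪x t - xstar, x t - xstar⟫
    + α / 3 * (α / 3 - q * t ^ (q - 1)) * (⟪x t - xstar, x' t⟫ + ⟪x' t, x t - xstar⟫))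
  + (a / 2 * ((2 * q - p) * t ^ (2 * q - p - 1)) * ⟪x t, x t⟫
    + a / 2 * t ^ (2 * q - p) * (⟪x t, x' t⟫ + ⟪x' t, x t⟫))

theorem energyRate_eq_of_ode (ht : 0 < t)
    (hode : x'' t + (α / t ^ q) • x' t + g' (x t) + (a / t ^ p) • x t = 0) :
    energyRate g g' xstar x x' x'' α q a p t =
      2 * q * t ^ (2 * q - 1) * (g (x t) - g xstar)
      - 2 * α / 3 * t ^ q * ⟪g' (x t), x t - xstar⟫
      + (q * t ^ (q - 1) - α / 3) * t ^ q * ⟪x' t, x' t⟫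
      + α / 3 * q * (1 - q) * t ^ (q - 2) * ⟪x t - xstar, x t - xstar⟫
      - a * (2 * α / 3) * t ^ (q - p) * ⟪x t, x t - xstar⟫
      + a * (2 * q - p) / 2 * t ^ (2 * q - p - 1) * ⟪x t, x t⟫ := by
  have hx'' : x'' t = -((α / t ^ q) • x' t) - g' (x t) - (a / t ^ p) • x t := by
    rw [← sub_eq_zero, ← hode]
    abel
  have e2 : t ^ (2 * q) = t ^ q * t ^ q := by rw [two_mul, Real.rpow_add ht]
  have e1 : t ^ (q - 1) = t ^ q / t := by rw [Real.rpow_sub_one ht.ne']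
  have e3 : t ^ (2 * q - 1) = t ^ q * t ^ q / t := by rw [Real.rpow_sub_one ht.ne', e2]
  have e4 : t ^ (q - 2) = t ^ q / (t * t) := by
    rw [Real.rpow_sub ht, Real.rpow_two, sq]
  have e5 : t ^ (q - p) = t ^ q / t ^ p := Real.rpow_sub ht _ _
  have e6 : t ^ (2 * q - p) = t ^ q * t ^ q / t ^ p := by rw [Real.rpow_sub ht, e2]
  have e7 : t ^ (2 * q - p - 1) = t ^ q * t ^ q / (t ^ p * t) := by
    rw [Real.rpow_sub_one ht.ne', e6, div_div]
  have htq := (Real.rpow_pos_of_pos ht q).ne'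
  have htp := (Real.rpow_pos_of_pos ht p).ne'
  rw [energyRate, hx'']
  simp only [inner_add_left, inner_add_right, inner_sub_left, inner_sub_right,
    inner_neg_left, inner_neg_right, real_inner_smul_left, real_inner_smul_right,
    real_inner_comm (x' t) (x t), real_inner_comm (x' t) xstar,
    real_inner_comm (g' (x t)) (x t), real_inner_comm (g' (x t)) xstar,
    real_inner_comm (g' (x t)) (x' t), real_inner_comm (x t) xstar]
  rw [e1, e2, e3, e4, e5, e6, e7]
  field_simp
  ring

theorem mul_inner_self_le_energy (hα : 0 < α) (ha : 0 ≤ a) (ht : 0 < t)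
    (hsmall : q * t ^ (q - 1) ≤ α / 6) (hmin : g xstar ≤ g (x t)) :
    α ^ 2 / 18 * ⟪x t - xstar, x t - xstar⟫ ≤ energy g xstar x x' α q a p t := by
  have h1 := mul_nonneg (Real.rpow_pos_of_pos ht (2 * q)).le (sub_nonneg.2 hmin)
  have h2 := mul_nonneg (mul_nonneg (by linarith : 0 ≤ a / 2)
    (Real.rpow_pos_of_pos ht (2 * q - p)).le) (real_inner_self_nonneg (x := x t))
  have h3 := real_inner_self_nonneg (x := (2 * α / 3) • (x t - xstar) + t ^ q • x' t)
  have h4 := mul_le_mul_of_nonneg_right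
    (by nlinarith : α ^ 2 / 18 ≤ α / 3 * (α / 3 - q * t ^ (q - 1)))
    (real_inner_self_nonneg (x := x t - xstar))
  rw [energy]
  linarith

theorem energyRate_le (hα : 0 < α) (hq0 : 0 < q) (hq1 : q < 1) (ha : 0 < a) (hqp : q + 1 < p)
    (ht : 0 < t) (hsmall : q * t ^ (q - 1) ≤ α / 6) (hmin : g xstar ≤ g (x t))
    (hgap : g (x t) - g xstar ≤ ⟪g' (x t), x t - xstar⟫)
    (hode : x'' t + (α / t ^ q) • x' t + g' (x t) + (a / t ^ p) • x t = 0) :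
    energyRate g g' xstar x x' x'' α q a p t ≤
      6 * q * (1 - q) / α * t ^ (q - 2) * energy g xstar x x' α q a p t
      - α / 6 * (t ^ q * ⟪x' t, x' t⟫) + a * α / 6 * ⟪xstar, xstar⟫ * t ^ (q - p) := by
  have hE := mul_inner_self_le_energy (x' := x') (p := p) hα ha.le ht hsmall hmin
  rw [energyRate_eq_of_ode ht hode, show 2 * q - 1 = (q - 1) + q by ring, Real.rpow_add ht]
  set E := energy g xstar x x' α q a p t
  set Δ := g (x t) - g xstar
  set A := t ^ q
  set B := t ^ (q - 1)
  have hA : 0 < A := Real.rpow_pos_of_pos ht _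
  have hG : 0 < t ^ (q - 2) := Real.rpow_pos_of_pos ht _
  have hZ : 0 < t ^ (2 * q - p - 1) := Real.rpow_pos_of_pos ht _
  have hΔ : 0 ≤ Δ := sub_nonneg.2 hmin
  have hxstar := inner_sub_add_inner_self_div_four_nonneg (x t) xstar
  -- the `‖x - x*‖²` term is not absorbed by the dissipation and is charged to `E` instead
  have h1 : α / 3 * q * (1 - q) * t ^ (q - 2) * ⟪x t - xstar, x t - xstar⟫
      ≤ 6 * q * (1 - q) / α * t ^ (q - 2) * E :=
    calc α / 3 * q * (1 - q) * t ^ (q - 2) * ⟪x t - xstar, x t - xstar⟫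
        = 6 * q * (1 - q) / α * t ^ (q - 2) * (α ^ 2 / 18 * ⟪x t - xstar, x t - xstar⟫) := by
          field_simp
          ring
      _ ≤ 6 * q * (1 - q) / α * t ^ (q - 2) * E :=
          mul_le_mul_of_nonneg_left hE (mul_nonneg (div_nonneg (by nlinarith) hα.le) hG.le)
  have h2 : 0 ≤ 2 * α / 3 * A * (⟪g' (x t), x t - xstar⟫ - Δ) :=
    mul_nonneg (by positivity) (by linarith)
  have h3 : 0 ≤ (α / 6 - q * B) * (A * Δ) := mul_nonneg (by linarith) (mul_nonneg hA.le hΔ)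
  have h4 : 0 ≤ (α / 6 - q * B) * (A * ⟪x' t, x' t⟫) :=
    mul_nonneg (by linarith) (mul_nonneg hA.le real_inner_self_nonneg)
  have h5 : 0 ≤ a * (2 * α / 3) * t ^ (q - p) * (⟪x t, x t - xstar⟫ + ⟪xstar, xstar⟫ / 4) :=
    mul_nonneg (by positivity) hxstar
  have h6 : 0 ≤ a * (p - 2 * q) / 2 * t ^ (2 * q - p - 1) * ⟪x t, x t⟫ :=
    mul_nonneg (mul_nonneg (div_nonneg (by nlinarith) zero_le_two) hZ.le)
      real_inner_self_nonneg
  nlinarith [mul_nonneg hA.le hΔ]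

theorem deriv2_inner_add_damping_le (ha : 0 < a) (ht : 0 < t)
    (hode : x'' t + (α / t ^ q) • x' t + g' (x t) + (a / t ^ p) • x t = 0)
    (hmono : 0 ≤ ⟪g' (x t), x t - xstar⟫) :
    (⟪x t - xstar, x'' t⟫ + ⟪x' t, x' t⟫) + (⟪x' t, x' t⟫ + ⟪x'' t, x t - xstar⟫)
      + α / t ^ q * (⟪x t - xstar, x' t⟫ + ⟪x' t, x t - xstar⟫)
    ≤ 2 * ⟪x' t, x' t⟫ + a * ⟪xstar, xstar⟫ / 2 * t ^ (-p) := by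
  have hx'' : x'' t = -((α / t ^ q) • x' t) - g' (x t) - (a / t ^ p) • x t := by
    rw [← sub_eq_zero, ← hode]
    abel
  have hxstar := mul_nonneg (div_nonneg ha.le (Real.rpow_pos_of_pos ht p).le)
    (inner_sub_add_inner_self_div_four_nonneg (x t) xstar)
  rw [hx'', Real.rpow_neg ht.le]
  simp only [inner_sub_left, inner_sub_right, inner_neg_left, inner_neg_right,
    real_inner_smul_left, real_inner_smul_right, real_inner_comm (x' t) (x t),
    real_inner_comm (x' t) xstar, real_inner_comm (g' (x t)) (x t),
    real_inner_comm (g' (x t)) xstar, real_inner_comm (x t) xstar] at hxstar hmono ⊢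
  simp only [div_eq_mul_inv] at hxstar ⊢
  nlinarith

variable [CompleteSpace H]

theorem hasDerivAt_energy (hg : ∀ y, HasGradientAt g (g' y) y) (ht : 0 < t)
    (hx : HasDerivAt x (x' t) t) (hx' : HasDerivAt x' (x'' t) t) :
    HasDerivAt (energy g xstar x x' α q a p) (energyRate g g' xstar x x' x'' α q a p t) t := by
  have hrpow : ∀ e : ℝ, HasDerivAt (fun s : ℝ => s ^ e) (e * t ^ (e - 1)) t := fun e =>
    Real.hasDerivAt_rpow_const (Or.inl ht.ne')
  have hX : HasDerivAt (fun s => x s - xstar) (x' t) t := hx.sub_const _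
  have hgx : HasDerivAt (fun s => g (x s)) ⟪g' (x t), x' t⟫ t := by
    simpa [Function.comp_def] using (hg (x t)).hasFDerivAt.comp_hasDerivAt t hx
  have hv := (hX.const_smul (2 * α / 3)).add ((hrpow q).smul hx')
  have hξ : HasDerivAt (fun s : ℝ => s ^ (q - 1)) ((q - 1) * t ^ (q - 2)) t := by
    simpa [sub_sub, one_add_one_eq_two] using hrpow (q - 1)
  exact ((((hrpow (2 * q)).mul (hgx.sub_const _)).add ((hv.inner ℝ hv).const_mul _)).add
    (((hξ.const_mul q).const_sub _).const_mul _ |>.mul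
      (hX.inner ℝ hX))).add (((hrpow (2 * q - p)).const_mul _).mul (hx.inner ℝ hx))

theorem bddAbovePrimitiveOn_rpow_mul_inner_deriv (hg_convex : ConvexOn ℝ univ g)
    (hg : ∀ y, HasGradientAt g (g' y) y) (hmin : ∀ y, g xstar ≤ g y)
    (hα : 0 < α) (hq0 : 0 < q) (hq1 : q < 1) (ha : 0 < a) (hqp : q + 1 < p) (hT : 0 < T)
    (hsmall : ∀ t ≥ T, q * t ^ (q - 1) ≤ α / 6)
    (hx : ∀ t ≥ T, HasDerivAt x (x' t) t) (hx' : ∀ t ≥ T, HasDerivAt x' (x'' t) t)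
    (hode : ∀ t ≥ T, x'' t + (α / t ^ q) • x' t + g' (x t) + (a / t ^ p) • x t = 0) :
    BddAbovePrimitiveOn (fun t => t ^ q * ⟪x' t, x' t⟫) T := by
  have hpos : ∀ t ≥ T, 0 < t := fun t ht => hT.trans_le ht
  have hβ : 0 ≤ 6 * q * (1 - q) / α := div_nonneg (by nlinarith) hα.le
  have hr : 0 ≤ a * α / 6 * ⟪xstar, xstar⟫ := mul_nonneg (by positivity) real_inner_self_nonneg
  have hv : ContinuousOn (fun t => α / 6 * (t ^ q * ⟪x' t, x' t⟫)) (Ici T) :=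
    continuousOn_of_forall_continuousAt fun t ht => continuousAt_const.mul
      ((Real.continuousAt_rpow_const t q (Or.inl (hpos t ht).ne')).mul
        ((hx' t ht).continuousAt.inner (hx' t ht).continuousAt))
  have hdiss := bddAbovePrimitiveOn_of_dissipation (E := energy g xstar x x' α q a p)
    (fun t ht => hasDerivAt_energy hg (hpos t ht) (hx t ht) (hx' t ht))
    (fun t ht => (mul_nonneg (by positivity) real_inner_self_nonneg).trans
      (mul_inner_self_le_energy hα ha.le (hpos t ht) (hsmall t ht) (hmin _)))
    ((bddAbovePrimitiveOn_rpow (by linarith) hT).const_mul hβ)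
    (fun t ht => mul_nonneg hβ (Real.rpow_pos_of_pos (hpos t ht) _).le)
    ((bddAbovePrimitiveOn_rpow (by linarith) hT).const_mul hr)
    (fun t ht => mul_nonneg hr (Real.rpow_pos_of_pos (hpos t ht) _).le) hv
    (fun t ht => mul_nonneg (by positivity)
      (mul_nonneg (Real.rpow_pos_of_pos (hpos t ht) _).le real_inner_self_nonneg))
    (fun t ht => energyRate_le hα hq0 hq1 ha hqp (hpos t ht) (hsmall t ht) (hmin _)
      (hg_convex.sub_le_inner_of_hasGradientAt (hg _) _) (hode t ht))
  refine (hdiss.const_mul (c := 6 / α) (by positivity)).congr fun t _ => ?_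
  field_simp

theorem exists_tendsto_inner_sub_self (hg_convex : ConvexOn ℝ univ g)
    (hg : ∀ y, HasGradientAt g (g' y) y) (hmin : ∀ y, g xstar ≤ g y)
    (hα : 0 < α) (hq0 : 0 < q) (hq1 : q < 1) (ha : 0 < a) (hqp : q + 1 < p) (hT : 0 < T)
    (hsmall : ∀ t ≥ T, q * t ^ (q - 1) ≤ α / 6)
    (hx : ∀ t ≥ T, HasDerivAt x (x' t) t) (hx' : ∀ t ≥ T, HasDerivAt x' (x'' t) t)
    (hode : ∀ t ≥ T, x'' t + (α / t ^ q) • x' t + g' (x t) + (a / t ^ p) • x t = 0) :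
    ∃ L, Tendsto (fun t => ⟪x t - xstar, x t - xstar⟫) atTop (𝓝 L) := by
  have hpos : ∀ t ≥ T, 0 < t := fun t ht => hT.trans_le ht
  have hX : ∀ t ≥ T, HasDerivAt (fun s => x s - xstar) (x' t) t := fun t ht =>
    (hx t ht).sub_const xstar
  have hc : 0 ≤ a * ⟪xstar, xstar⟫ / 2 :=
    div_nonneg (mul_nonneg ha.le real_inner_self_nonneg) zero_le_two
  have hw : BddAbovePrimitiveOn
      (fun t => t ^ q * (2 * ⟪x' t, x' t⟫ + a * ⟪xstar, xstar⟫ / 2 * t ^ (-p))) T := by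
    refine ((bddAbovePrimitiveOn_rpow_mul_inner_deriv hg_convex hg hmin hα hq0 hq1 ha hqp hT
      hsmall hx hx' hode).const_mul zero_le_two |>.add
        ((bddAbovePrimitiveOn_rpow (e := q - p) (by linarith) hT).const_mul hc)).congr
      fun t ht => ?_
    rw [sub_eq_add_neg, Real.rpow_add (hpos t ht)]
    ring
  refine exists_tendsto_of_damped_le hα hT (fun t ht => (hsmall t ht).trans (by linarith))
    (fun t ht => (hX t ht).inner ℝ (hX t ht))
    (fun t ht => ((hX t ht).inner ℝ (hx' t ht)).add ((hx' t ht).inner ℝ (hX t ht)))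
    (fun t _ => real_inner_self_nonneg) ?_
    (fun t ht => add_nonneg (mul_nonneg zero_le_two real_inner_self_nonneg)
      (mul_nonneg hc (Real.rpow_pos_of_pos (hpos t ht) _).le))
    (fun t ht => deriv2_inner_add_damping_le ha (hpos t ht) (hode t ht)
      ((sub_nonneg.2 (hmin _)).trans (hg_convex.sub_le_inner_of_hasGradientAt (hg _) _))) hw
  exact continuousOn_of_forall_continuousAt fun t ht =>
    (continuousAt_const.mul ((hx' t ht).continuousAt.inner (hx' t ht).continuousAt)).add
      (continuousAt_const.mul (Real.continuousAt_rpow_const t (-p) (Or.inl (hpos t ht).ne')))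

end TikhonovFlow

theorem stmt9_general
    {H : Type*} [NormedAddCommGroup H] [InnerProductSpace ℝ H] [CompleteSpace H]
    (g : H → ℝ) (g' : H → H)
    (hg_convex : ConvexOn ℝ Set.univ g)
    (hg_grad : ∀ y : H, HasGradientAt g (g' y) y)
    (t₀ α q a p : ℝ) (hα : 0 < α) (hq0 : 0 < q) (ha0 : 0 < a)
    (x x' x'' : ℝ → H)
    (hx : ∀ t ≥ t₀, HasDerivAt x (x' t) t)
    (hx' : ∀ t ≥ t₀, HasDerivAt x' (x'' t) t)
    (hODE : ∀ t ≥ t₀, x'' t + (α / t ^ q) • x' t + g' (x t) + (a / t ^ p) • x t = 0)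
    (hq1 : q < 1) (hqp : q + 1 < p)
    (xstar : H) (hxstar : ∀ y : H, g xstar ≤ g y) :
    ∃ L : ℝ, Filter.Tendsto (fun t => ‖x t - xstar‖) Filter.atTop (nhds L) := by
  have hdecay : Tendsto (fun t => q * t ^ (q - 1)) atTop (𝓝 0) := by
    simpa using (tendsto_rpow_neg_atTop (by linarith : 0 < 1 - q)).const_mul q
  obtain ⟨T, hT⟩ := eventually_atTop.1 <|
    ((hdecay.eventually (ge_mem_nhds (by positivity : (0 : ℝ) < α / 6))).and
      (eventually_gt_atTop 0)).and (eventually_ge_atTop t₀)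
  obtain ⟨⟨-, hT0⟩, hTt₀⟩ := hT T le_rfl
  obtain ⟨L, hL⟩ := TikhonovFlow.exists_tendsto_inner_sub_self hg_convex hg_grad hxstar hα hq0
    hq1 ha0 hqp hT0 (fun t ht => (hT t ht).1.1) (fun t ht => hx t (hTt₀.trans ht))
    (fun t ht => hx' t (hTt₀.trans ht)) (fun t ht => hODE t (hTt₀.trans ht))
  exact ⟨√L, by simpa [real_inner_self_eq_norm_sq] using hL.sqrt⟩

theorem stmt9
    {H : Type*} [NormedAddCommGroup H] [InnerProductSpace ℝ H] [CompleteSpace H]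
    (g : H → ℝ) (g' : H → H)
    (hg_convex : ConvexOn ℝ Set.univ g)
    (hg_grad : ∀ y : H, HasGradientAt g (g' y) y)
    (hg_lip : ∀ s : Set H, Bornology.IsBounded s → ∃ K : NNReal, LipschitzOnWith K g' s)
    (t₀ α q a p : ℝ) (ht₀ : 0 < t₀) (hα : 0 < α) (hq0 : 0 < q) (ha0 : 0 < a) (hp0 : 0 < p)
    (x x' x'' : ℝ → H)
    (hx : ∀ t ≥ t₀, HasDerivAt x (x' t) t)
    (hx' : ∀ t ≥ t₀, HasDerivAt x' (x'' t) t)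
    (hx''c : ContinuousOn x'' (Set.Ici t₀))
    (hODE : ∀ t ≥ t₀, x'' t + (α / t ^ q) • x' t + g' (x t) + (a / t ^ p) • x t = 0)
    (hq1 : q < 1) (hqp : q + 1 < p) (hp2 : p ≤ 2) (hpa : p = 2 → a ≥ q * (1 - q))
    (xstar : H) (hxstar : ∀ y : H, g xstar ≤ g y) :
    ∃ L : ℝ, Filter.Tendsto (fun t => ‖x t - xstar‖) Filter.atTop (nhds L) :=
  stmt9_general g g' hg_convex hg_grad t₀ α q a p hα hq0 ha0 x x' x'' hx hx' hODE hq1 hqp xstar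
    hxstar
end
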